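/- Let f be a homeomorphism of a compact metric space (X, dist). For any open neighborhood U of the nonwandering set Ω(f) there exists d₁ > 0 such that every periodic d-pseudotrajectory of f with d ≤ d₁ contains at least one point belonging to U (i.e., if {x_i}_{i∈ℤ} is a d-pseudotrajectory with d ≤ d₁ and x_{i+μ} = x_i for all i and some μ ≥ 1, then x_i ∈ U for some i). -/

import Mathlib

/-- `x : ℤ → X` is a `d`-pseudotrajectory of `f`: `dist (f (x i)) (x (i+1)) < d` for all `i`. -/
def IsPseudoTraj {X : Type*} [MetricSpace X] (f : X → X) (d : ℝ) (x : ℤ → X) : Prop :=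
  ∀ i : ℤ, dist (f (x i)) (x (i + 1)) < d

/-- `x : ℤ → X` is periodic: `x (i + μ) = x i` for all `i` and some `μ ≥ 1`. -/
def IsPeriodicSeq {X : Type*} (x : ℤ → X) : Prop :=
  ∃ μ : ℕ, 1 ≤ μ ∧ ∀ i : ℤ, x (i + μ) = x i

/-- The nonwandering set of `f`: points `x` such that for every neighborhood `V` of `x`
there exists `n ≥ 1` with `f^[n] '' V ∩ V ≠ ∅`. -/
def NonWanderingSet {X : Type*} [TopologicalSpace X] (f : X → X) : Set X :=
  {x | ∀ V ∈ nhds x, ∃ n : ℕ, 1 ≤ n ∧ ∃ y ∈ V, f^[n] y ∈ V}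

/-!
Suppose that for every `d > 0` some `d`-pseudotrajectory of `f` avoids the open set `U`. The
points that are limits of such pseudotrajectories as `d → 0` form a nonempty compact set outside
`U`, and passing to the limit in `dist (f (x i)) (x (i + 1)) < d` shows that `f` maps it into
itself. A cluster point of a forward orbit in this set is nonwandering, contradicting `Ω(f) ⊆ U`.
-/

open Set Filter Topology

section NonWandering

variable {X : Type*} [TopologicalSpace X] {f : X → X}

theorem mem_nonWanderingSet_of_mapClusterPt {z w : X}
    (h : MapClusterPt w atTop fun n ↦ f^[n] z) : w ∈ NonWanderingSet f := by
  intro V hV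
  obtain ⟨m, hm⟩ := (mapClusterPt_iff_frequently.1 h V hV).exists
  obtain ⟨n, hmn, hn⟩ := (mapClusterPt_iff_frequently.1 h V hV).forall_exists_of_atTop (m + 1)
  refine ⟨n - m, by omega, f^[m] z, hm, ?_⟩
  rwa [← Function.iterate_add_apply, Nat.sub_add_cancel (by omega)]

theorem IsCompact.exists_mem_nonWanderingSet {s : Set X} (hs : IsCompact s) (hne : s.Nonempty)
    (hf : MapsTo f s s) : ∃ w ∈ s, w ∈ NonWanderingSet f := by
  obtain ⟨z, hz⟩ := hne
  obtain ⟨w, hws, hw⟩ := hs.exists_mapClusterPt_of_frequently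
    (l := atTop) (f := fun n ↦ f^[n] z) (Frequently.of_forall fun n ↦ hf.iterate n hz)
  exact ⟨w, hws, mem_nonWanderingSet_of_mapClusterPt hw⟩

end NonWandering

section PseudoTraj

variable {X : Type*} [MetricSpace X] {f : X → X} {K : Set X} {d d' : ℝ}

theorem IsPseudoTraj.mono {x : ℤ → X} (hx : IsPseudoTraj f d x) (hdd' : d ≤ d') :
    IsPseudoTraj f d' x :=
  fun i ↦ (hx i).trans_le hdd'

def pseudoTrajPoints (f : X → X) (K : Set X) (d : ℝ) : Set X :=
  {y | ∃ x : ℤ → X, IsPseudoTraj f d x ∧ range x ⊆ K ∧ y ∈ range x}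

theorem pseudoTrajPoints_subset : pseudoTrajPoints f K d ⊆ K :=
  fun _ ⟨_, _, hxK, hy⟩ ↦ hxK hy

theorem closure_pseudoTrajPoints_subset (hK : IsClosed K) :
    closure (pseudoTrajPoints f K d) ⊆ K :=
  closure_minimal pseudoTrajPoints_subset hK

theorem pseudoTrajPoints_mono (hdd' : d ≤ d') :
    pseudoTrajPoints f K d ⊆ pseudoTrajPoints f K d' :=
  fun _ ⟨x, hx, hxK, hy⟩ ↦ ⟨x, hx.mono hdd', hxK, hy⟩

theorem exists_dist_apply_lt_of_mem_pseudoTrajPoints {y : X} (hy : y ∈ pseudoTrajPoints f K d) :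
    ∃ y' ∈ pseudoTrajPoints f K d, dist (f y) y' < d := by
  obtain ⟨x, hx, hxK, i, rfl⟩ := hy
  exact ⟨x (i + 1), ⟨x, hx, hxK, i + 1, rfl⟩, hx i⟩

def pseudoTrajLimitSet (f : X → X) (K : Set X) : Set X :=
  ⋂ d : Ioi (0 : ℝ), closure (pseudoTrajPoints f K d)

theorem pseudoTrajLimitSet_subset (hK : IsClosed K) : pseudoTrajLimitSet f K ⊆ K :=
  (iInter_subset _ ⟨1, mem_Ioi.2 one_pos⟩).trans (closure_pseudoTrajPoints_subset hK)

theorem isCompact_pseudoTrajLimitSet (hK : IsCompact K) : IsCompact (pseudoTrajLimitSet f K) :=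
  hK.of_isClosed_subset (isClosed_iInter fun _ ↦ isClosed_closure)
    (pseudoTrajLimitSet_subset hK.isClosed)

theorem nonempty_pseudoTrajLimitSet (hK : IsCompact K)
    (hne : ∀ d > 0, (pseudoTrajPoints f K d).Nonempty) : (pseudoTrajLimitSet f K).Nonempty := by
  have : Nonempty (Ioi (0 : ℝ)) := ⟨⟨1, mem_Ioi.2 one_pos⟩⟩
  refine IsCompact.nonempty_iInter_of_directed_nonempty_isCompact_isClosed _ ?_
    (fun d ↦ (hne d d.2).closure)
    (fun _ ↦ hK.of_isClosed_subset isClosed_closure (closure_pseudoTrajPoints_subset hK.isClosed))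
    fun _ ↦ isClosed_closure
  intro d₁ d₂
  refine ⟨⟨min d₁ d₂, mem_Ioi.2 (lt_min d₁.2 d₂.2)⟩, ?_, ?_⟩ <;>
    exact closure_mono (pseudoTrajPoints_mono (by simp))

theorem mapsTo_pseudoTrajLimitSet (hf : Continuous f) :
    MapsTo f (pseudoTrajLimitSet f K) (pseudoTrajLimitSet f K) := by
  intro w hw
  refine mem_iInter.2 fun d ↦ Metric.mem_closure_iff.2 fun ε hε ↦ ?_
  obtain ⟨δ, hδ, hfδ⟩ := Metric.continuous_iff.1 hf w (ε / 2) (half_pos hε)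
  -- With `d' ≤ ε / 2`, the jump from `f y` to the next point `y'` is below `ε / 2`.
  set d' := min (d : ℝ) (ε / 2)
  obtain ⟨y, hy, hwy⟩ := Metric.mem_closure_iff.1
    (mem_iInter.1 hw ⟨d', mem_Ioi.2 (lt_min d.2 (half_pos hε))⟩) δ hδ
  obtain ⟨y', hy', hyy'⟩ := exists_dist_apply_lt_of_mem_pseudoTrajPoints hy
  refine ⟨y', pseudoTrajPoints_mono (min_le_left _ _) hy', ?_⟩
  calc dist (f w) y' ≤ dist (f y) (f w) + dist (f y) y' := dist_triangle_left _ _ _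
    _ < ε / 2 + ε / 2 :=
      add_lt_add (hfδ y (by rwa [dist_comm])) (hyy'.trans_le (min_le_right _ _))
    _ = ε := add_halves ε

theorem exists_mem_nonWanderingSet_of_pseudoTrajPoints_nonempty (hf : Continuous f)
    (hK : IsCompact K) (hne : ∀ d > 0, (pseudoTrajPoints f K d).Nonempty) :
    ∃ w ∈ K, w ∈ NonWanderingSet f := by
  obtain ⟨w, hw, hwΩ⟩ := (isCompact_pseudoTrajLimitSet hK).exists_mem_nonWanderingSet
    (nonempty_pseudoTrajLimitSet hK hne) (mapsTo_pseudoTrajLimitSet hf)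
  exact ⟨w, pseudoTrajLimitSet_subset hK.isClosed hw, hwΩ⟩

end PseudoTraj

/-- Let `f` be a homeomorphism of a compact metric space `X`. For any open neighborhood `U`
of the nonwandering set `Ω(f)` there exists `d₁ > 0` such that every periodic
`d`-pseudotrajectory of `f` with `d ≤ d₁` contains at least one point belonging to `U`. -/
theorem periodic_pseudotraj_meets_nbhd_of_nonwandering {X : Type*} [MetricSpace X]
    [CompactSpace X] (f : X ≃ₜ X) (U : Set X) (hUopen : IsOpen U)
    (hU : NonWanderingSet f ⊆ U) :
    ∃ d₁ > (0 : ℝ), ∀ d : ℝ, 0 < d → d ≤ d₁ →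
      ∀ x : ℤ → X, IsPseudoTraj f d x → IsPeriodicSeq x → ∃ i : ℤ, x i ∈ U := by
  by_contra! hcon
  have hne : ∀ d > 0, (pseudoTrajPoints f Uᶜ d).Nonempty := by
    intro d₁ hd₁
    obtain ⟨d, -, hdd₁, x, hx, -, hxU⟩ := hcon d₁ hd₁
    exact ⟨x 0, x, hx.mono hdd₁, range_subset_iff.2 hxU, 0, rfl⟩
  obtain ⟨w, hwU, hwΩ⟩ := exists_mem_nonWanderingSet_of_pseudoTrajPoints_nonempty
    f.continuous hUopen.isClosed_compl.isCompact hne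
  exact hwU (hU hwΩ)
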